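/- For every n \ge 2, the condition number \lambda_{max}/\lambda_{min} of the matrix B_n (entries b11 = n, b12 = b21 = n(n+1)/2, b22 = n(n+1)(2n+1)/6) is at least n^2. -/

import Mathlib

open Finset Real Filter

noncomputable def B (n : ℕ) : Matrix (Fin 2) (Fin 2) ℝ :=
  !![(n:ℝ), n*(n+1)/2; n*(n+1)/2, n*(n+1)*(2*n+1)/6]

lemma hB (n : ℕ) : (B n).IsHermitian := by
  show (B n).conjTranspose = B n
  ext i j
  fin_cases i <;> fin_cases j <;> simp [B]

noncomputable def lmaxB (n : ℕ) : ℝ := max ((hB n).eigenvalues 0) ((hB n).eigenvalues 1)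
noncomputable def lminB (n : ℕ) : ℝ := min ((hB n).eigenvalues 0) ((hB n).eigenvalues 1)

lemma traceB (n : ℕ) :
    (hB n).eigenvalues 0 + (hB n).eigenvalues 1 = (n:ℝ) + n*(n+1)*(2*n+1)/6 := by
  have h : (B n).trace = (hB n).eigenvalues 0 + (hB n).eigenvalues 1 := by
    nth_rewrite 1 [(hB n).spectral_theorem]
    rw [Unitary.conjStarAlgAut_apply, Matrix.trace_mul_cycle, Unitary.coe_star_mul_self, one_mul, Matrix.trace_diagonal]
    simp [Fin.sum_univ_two]
  rw [← h]
  simp [Matrix.trace, B, Fin.sum_univ_two, Matrix.diag]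

lemma detB (n : ℕ) :
    (hB n).eigenvalues 0 * (hB n).eigenvalues 1 = (n:ℝ)^2*(n+1)*(n-1)/12 := by
  have h := (hB n).det_eq_prod_eigenvalues
  rw [Fin.prod_univ_two] at h
  simp only [RCLike.ofReal_real_eq_id, id] at h
  rw [← h, Matrix.det_fin_two]
  simp [B]
  ring

/-- For every `n ≥ 2`, the condition number `λmax/λmin` of `B n` is at least `n²`. -/
theorem cond_Bn_lower_bound (n : ℕ) (hn : 2 ≤ n) :
    (n : ℝ)^2 ≤ lmaxB n / lminB n := by
  have hx : (2:ℝ) ≤ (n:ℝ) := by exact_mod_cast hn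
  set x : ℝ := (n:ℝ) with hxdef
  set m : ℝ := lminB n with hm
  set M : ℝ := lmaxB n with hM
  have hsum : m + M = x + x*(x+1)*(2*x+1)/6 := by
    rw [hm, hM, lminB, lmaxB]
    rcases le_total ((hB n).eigenvalues 0) ((hB n).eigenvalues 1) with h | h
    · rw [min_eq_left h, max_eq_right h]; exact traceB n
    · rw [min_eq_right h, max_eq_left h]
      rw [add_comm]; exact traceB n
  have hprod : m * M = x^2*(x+1)*(x-1)/12 := by
    rw [hm, hM, lminB, lmaxB]
    rcases le_total ((hB n).eigenvalues 0) ((hB n).eigenvalues 1) with h | h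
    · rw [min_eq_left h, max_eq_right h]; exact detB n
    · rw [min_eq_right h, max_eq_left h]
      rw [mul_comm]; exact detB n
  have hmM : m ≤ M := min_le_max
  set T : ℝ := x + x*(x+1)*(2*x+1)/6 with hT
  set D : ℝ := x^2*(x+1)*(x-1)/12 with hD
  have hTpos : 0 < T := by rw [hT]; nlinarith
  have hDpos : 0 < D := by
    have h1 : 0 < x^2*(x+1)*(x-1) :=
      mul_pos (mul_pos (pow_pos (by linarith) 2) (by linarith)) (by linarith)
    rw [hD]; linarith
  have hmpos : 0 < m := by
    rcases lt_or_ge 0 m with h | h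
    · exact h
    · exfalso
      have hMle : M ≤ 0 := by nlinarith
      nlinarith
  have hMpos : 0 < M := lt_of_lt_of_le hmpos hmM
  -- Key polynomial inequality: (x²+1)² D ≤ x² T²
  have hkey : (x^2+1)^2 * D ≤ x^2 * T^2 := by
    rw [hT, hD]
    nlinarith [sq_nonneg x, sq_nonneg (x-2), sq_nonneg (x*(x-2)), pow_pos (lt_of_lt_of_le zero_lt_two hx) 3, pow_pos (lt_of_lt_of_le zero_lt_two hx) 4]
  rw [le_div_iff₀ hmpos]
  have h1 : 0 ≤ x^2*(m+M)^2 - (x^2+1)^2*(m*M) := by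
    rw [hsum, hprod]; linarith [hkey]
  have hQ : 0 < x^2*M - m := by nlinarith
  nlinarith [h1, hQ]
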